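/- Let A = {0,1}^ℕ (an infinite compact outcome space) and let μ be the probability measure on A^ℤ under which the coordinates ζ_n[0], n ∈ ℤ, are i.i.d. fair coin flips and ζ_n[k] = ζ_{n−k}[0] for all k ≥ 1. Then μ is stationary, its future tail σ-algebra (completed) equals the full Borel σ-algebra of A^ℤ, and its past tail σ-algebra (completed) is trivial. Consequently the completed past and future tails of a stationary process need not coincide when the outcome set is infinite. -/

import Mathlib

open MeasureTheory
open scoped ENNReal

/-- The left shift on `A^ℤ`. -/
def shiftZ {A : Type*} (ω : ℤ → A) : ℤ → A := fun n => ω (n + 1)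

/-- The σ-algebra on `A^ℤ` generated by the coordinates with index in `s`. -/
def coordSigma (A : Type*) [MeasurableSpace A] (s : Set ℤ) : MeasurableSpace (ℤ → A) :=
  ⨆ k ∈ s, MeasurableSpace.comap (fun ω : ℤ → A => ω k) inferInstance

/-- The past tail σ-algebra `∩_m σ(…, ζ_{-m-1}, ζ_{-m})`. -/
def pastTail (A : Type*) [MeasurableSpace A] : MeasurableSpace (ℤ → A) :=
  ⨅ m : ℕ, coordSigma A (Set.Iic (-(m : ℤ)))

/-- The future tail σ-algebra `∩_m σ(ζ_m, ζ_{m+1}, …)`. -/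
def futureTail (A : Type*) [MeasurableSpace A] : MeasurableSpace (ℤ → A) :=
  ⨅ m : ℕ, coordSigma A (Set.Ici (m : ℤ))

/-!
Write `x n = ζ_n[0]`. Under `μ` the coordinates `x n` are fair coin flips and, almost surely,
`ζ_n = (x_n, x_{n-1}, x_{n-2}, …)`, so `μ` is the image of the coin-tossing measure on `Bool^ℤ`
under the window map; stationarity is inherited from the shift invariance of coin tossing.
Each `x_n` can be read off arbitrarily far in the future, since `x_n = ζ_{n+j}[j]` for all
`j ≥ 1`, so the whole path is measurable for the completed future tail. On the other hand the
past tail of `ζ` only sees the tail of the independent sequence `(x_n)` as `n → -∞`, which is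
trivial by Kolmogorov's 0-1 law. The event `{ζ_0[0] = true}` has probability `1/2`, so it lies in
the completed future tail but not in the completed past tail.
-/

open Filter ProbabilityTheory

lemma measurable_shiftZ {α : Type*} [MeasurableSpace α] : Measurable (shiftZ (A := α)) :=
  measurable_pi_lambda _ fun n => measurable_pi_apply (n + 1)

lemma MeasurableSet.setOf_eventually_atTop {Ω : Type*} {m : MeasurableSpace Ω}
    {p : ℕ → Ω → Prop} (hp : ∀ᶠ j in atTop, MeasurableSet {ω | p j ω}) :
    MeasurableSet {ω | ∀ᶠ j in atTop, p j ω} := by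
  obtain ⟨N, hN⟩ := eventually_atTop.1 hp
  have : {ω | ∀ᶠ j in atTop, p j ω} = ⋃ n ≥ N, ⋂ j ≥ n, {ω | p j ω} := by
    ext ω
    simp only [eventually_atTop, Set.mem_ofPred_eq, Set.mem_iUnion, Set.mem_iInter]
    exact ⟨fun ⟨n, hn⟩ => ⟨max n N, le_max_right n N, fun j hj => hn j (le_of_max_le_left hj)⟩,
      fun ⟨n, _, hn⟩ => ⟨n, hn⟩⟩
  rw [this]
  exact .iUnion fun n => .iUnion fun hn => .iInter fun j => .iInter fun hj => hN j (hn.trans hj)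

lemma exists_measurableSet_measure_symmDiff_eq_zero_of_ae_eq_id {Ω : Type*}
    {m m₀ : MeasurableSpace Ω} {μ : Measure[m₀] Ω} {g : Ω → Ω} (hg : Measurable[m, m₀] g)
    (hg_id : g =ᵐ[μ] id) {S : Set Ω} (hS : MeasurableSet S) :
    ∃ B, MeasurableSet[m] B ∧ μ (symmDiff S B) = 0 := by
  refine ⟨g ⁻¹' S, hg hS, measure_symmDiff_eq_zero_iff.2 ?_⟩
  filter_upwards [hg_id] with ω hω
  exact congrArg S hω.symm

section FairCoin

variable {ι : Type*}

def IsFairCoinProcess (P : Measure (ι → Bool)) : Prop :=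
  ∀ (F : Finset ι) (b : ι → Bool), P {x | ∀ i ∈ F, x i = b i} = (1 / 2 : ℝ≥0∞) ^ F.card

lemma measurableSet_setOf_forall_mem_eq [Countable ι] (F : Finset ι) (b : ι → Bool) :
    MeasurableSet {x : ι → Bool | ∀ i ∈ F, x i = b i} :=
  MeasurableSet.pi F.countable_toSet fun i _ => measurableSet_singleton (b i)

namespace IsFairCoinProcess

variable {P Q : Measure (ι → Bool)} (hP : IsFairCoinProcess P)
include hP

lemma isProbabilityMeasure : IsProbabilityMeasure P :=
  ⟨by simpa using hP ∅ fun _ => true⟩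

lemma measure_eval_eq (i : ι) (b : Bool) : P {x | x i = b} = 1 / 2 := by
  simpa using hP {i} fun _ => b

lemma iIndepFun_eval [Countable ι] : iIndepFun (fun i (x : ι → Bool) => x i) P := by
  have := hP.isProbabilityMeasure
  have hgen : ∀ i, MeasurableSpace.comap (fun x : ι → Bool => x i) inferInstance =
      MeasurableSpace.generateFrom {{x | x i = true}} := fun i =>
    le_antisymm
      (Measurable.comap_le <| measurable_to_bool <| MeasurableSpace.measurableSet_generateFrom rfl)
      (MeasurableSpace.generateFrom_le <| by rintro _ rfl; exact ⟨{true}, trivial, rfl⟩)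
  rw [iIndepFun_iff_iIndep, funext hgen, ← iIndepSet_iff_iIndep, iIndepSet_iff_meas_biInter
    fun i => measurableSet_eq_fun (measurable_pi_apply i) measurable_const]
  intro F
  simp_rw [hP.measure_eval_eq, Finset.prod_const, ← hP F fun _ => true, Set.ofPred_forall]

lemma map_eval_eq (hQ : IsFairCoinProcess Q) (i : ι) :
    P.map (fun x => x i) = Q.map (fun x => x i) := by
  refine Measure.ext_iff_singleton.2 fun b => ?_
  rw [Measure.map_apply (measurable_pi_apply i) (measurableSet_singleton b),
    Measure.map_apply (measurable_pi_apply i) (measurableSet_singleton b)]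
  exact (hP.measure_eval_eq i b).trans (hQ.measure_eval_eq i b).symm

lemma unique [Countable ι] (hQ : IsFairCoinProcess Q) : P = Q := by
  have := hP.isProbabilityMeasure
  have := hQ.isProbabilityMeasure
  have hP' := hP.iIndepFun_eval.map_fun_eq_infinitePi_map fun i => measurable_pi_apply i
  have hQ' := hQ.iIndepFun_eval.map_fun_eq_infinitePi_map fun i => measurable_pi_apply i
  simp only [Measure.map_id'] at hP' hQ'
  rw [hP', hQ', funext (hP.map_eval_eq hQ)]

lemma map_comp_equiv [Countable ι] (e : ι ≃ ι) : IsFairCoinProcess (P.map (· ∘ e)) := by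
  intro F b
  have hpre : (· ∘ e) ⁻¹' {x : ι → Bool | ∀ i ∈ F, x i = b i} =
      {x | ∀ j ∈ F.map e.toEmbedding, x j = b (e.symm j)} := by
    ext x
    simp only [Set.mem_preimage, Set.mem_ofPred_eq, Function.comp_apply, Finset.mem_map_equiv]
    conv_rhs => rw [← e.forall_congr_right]
    simp only [Equiv.symm_apply_apply]
  rw [Measure.map_apply (by fun_prop) (measurableSet_setOf_forall_mem_eq F b), hpre, hP,
    Finset.card_map]

lemma map_comp_equiv_eq [Countable ι] (e : ι ≃ ι) : P.map (· ∘ e) = P :=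
  (hP.map_comp_equiv e).unique hP

end IsFairCoinProcess

lemma IsFairCoinProcess.measurePreserving_shiftZ {P : Measure (ℤ → Bool)}
    (hP : IsFairCoinProcess P) : MeasurePreserving shiftZ P P :=
  ⟨measurable_shiftZ, hP.map_comp_equiv_eq (Equiv.addRight 1)⟩

end FairCoin

section Windows

variable {α : Type*}

def pastWindows (x : ℤ → α) : ℤ → ℕ → α := fun n k => x (n - k)

def headValues (ω : ℤ → ℕ → α) : ℤ → α := fun n => ω n 0

lemma shiftZ_comp_pastWindows :
    shiftZ ∘ pastWindows (α := α) = pastWindows ∘ shiftZ := by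
  funext x n k
  simp only [Function.comp_apply, shiftZ, pastWindows]
  ring_nf

lemma pastWindows_headValues {ω : ℤ → ℕ → α}
    (hω : ∀ (n : ℤ) (k : ℕ), 1 ≤ k → ω n k = ω (n - k) 0) :
    pastWindows (headValues ω) = ω := by
  funext n k
  rcases Nat.eq_zero_or_pos k with rfl | hk
  · simp [pastWindows, headValues]
  · exact (hω n k hk).symm

variable [MeasurableSpace α]

lemma measurable_pastWindows : Measurable (pastWindows (α := α)) :=
  measurable_pi_lambda _ fun n => measurable_pi_lambda _ fun k => measurable_pi_apply (n - k)

lemma measurable_headValues : Measurable (headValues (α := α)) :=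
  measurable_pi_lambda _ fun n => (measurable_pi_apply 0).comp (measurable_pi_apply n)

lemma map_headValues_map_pastWindows {μ : Measure (ℤ → ℕ → α)}
    (hμ : ∀ᵐ ω ∂μ, ∀ (n : ℤ) (k : ℕ), 1 ≤ k → ω n k = ω (n - k) 0) :
    (μ.map headValues).map pastWindows = μ := by
  rw [Measure.map_map measurable_pastWindows measurable_headValues,
    Measure.map_congr (f := pastWindows ∘ headValues) (g := id)
      (hμ.mono fun ω hω => pastWindows_headValues hω), Measure.map_id]

lemma MeasureTheory.MeasurePreserving.shiftZ_map_pastWindows {ν : Measure (ℤ → α)}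
    (hν : MeasurePreserving shiftZ ν ν) :
    MeasurePreserving shiftZ (ν.map pastWindows) (ν.map pastWindows) := by
  refine ⟨measurable_shiftZ, ?_⟩
  rw [Measure.map_map measurable_shiftZ measurable_pastWindows, shiftZ_comp_pastWindows,
    ← Measure.map_map measurable_pastWindows measurable_shiftZ, hν.map_eq]

lemma comap_eval_le_coordSigma {s : Set ℤ} {i : ℤ} (hi : i ∈ s) :
    MeasurableSpace.comap (fun ω : ℤ → α => ω i) inferInstance ≤ coordSigma α s :=
  le_iSup₂ (f := fun k (_ : k ∈ s) => MeasurableSpace.comap (fun ω : ℤ → α => ω k) _) i hi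

lemma coordSigma_le (s : Set ℤ) : coordSigma α s ≤ MeasurableSpace.pi :=
  iSup₂_le fun k _ => (measurable_pi_apply k).comap_le

lemma measurable_pastWindows_coordSigma_Iic {a b : ℤ} (hab : a ≤ b) :
    Measurable[coordSigma α (Set.Iic b), coordSigma (ℕ → α) (Set.Iic a)] pastWindows := by
  rw [measurable_iff_comap_le, coordSigma]
  simp only [MeasurableSpace.comap_iSup, MeasurableSpace.comap_comp, MeasurableSpace.pi]
  refine iSup₂_le fun k hk => iSup_le fun j => comap_eval_le_coordSigma ?_
  simp only [Set.mem_Iic] at hk ⊢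
  omega

lemma comap_pastWindows_pastTail_le :
    (pastTail (ℕ → α)).comap pastWindows ≤
      limsup (fun i => MeasurableSpace.comap (fun x : ℤ → α => x i) inferInstance) atBot := by
  rw [atBot_basis.limsup_eq_iInf_iSup]
  refine le_iInf₂ fun b _ => ?_
  refine (MeasurableSpace.comap_mono (iInf_le _ (-b).toNat)).trans ?_
  exact measurable_iff_comap_le.1 (measurable_pastWindows_coordSigma_Iic (by omega))

lemma measure_map_pastWindows_eq_zero_or_one {ν : Measure (ℤ → α)}
    (hν : iIndepFun (fun i (x : ℤ → α) => x i) ν) {S : Set (ℤ → ℕ → α)}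
    (hS : MeasurableSet[pastTail (ℕ → α)] S) :
    ν.map pastWindows S = 0 ∨ ν.map pastWindows S = 1 := by
  have hS_le : MeasurableSet S := coordSigma_le _ _ (MeasurableSpace.measurableSet_iInf.1 hS 0)
  rw [Measure.map_apply measurable_pastWindows hS_le]
  exact measure_zero_or_one_of_measurableSet_limsup_atBot
    (fun i => (measurable_pi_apply i).comap_le) ((iIndepFun_iff_iIndep _ _ _).1 hν)
    (comap_pastWindows_pastTail_le _ ⟨S, hS, rfl⟩)

end Windows

section DiagonalLimit

open Classical in
/-- Using `∀ᶠ j` instead of a fixed `j` makes this measurable for every `σ(ζ_m, ζ_{m+1}, …)`. -/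
noncomputable def diagonalLimit (ω : ℤ → ℕ → Bool) : ℤ → Bool :=
  fun n => decide (∀ᶠ j : ℕ in atTop, ω (n + j) j = true)

lemma measurable_diagonalLimit :
    Measurable[futureTail (ℕ → Bool)] diagonalLimit := by
  refine @measurable_pi_lambda _ _ _ (futureTail (ℕ → Bool)) _ _ fun n => measurable_to_bool ?_
  simp only [diagonalLimit, Set.preimage, Set.mem_singleton_iff, decide_eq_true_eq]
  refine MeasurableSpace.measurableSet_iInf.2 fun m => MeasurableSet.setOf_eventually_atTop ?_
  filter_upwards [eventually_ge_atTop (m - n).toNat] with j hj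
  exact comap_eval_le_coordSigma (s := Set.Ici (m : ℤ)) (i := n + j)
    (by simp only [Set.mem_Ici]; omega) _
    ⟨{a | a j = true}, measurableSet_eq_fun (measurable_pi_apply j) measurable_const, rfl⟩

lemma diagonalLimit_eq_headValues {ω : ℤ → ℕ → Bool}
    (hω : ∀ (n : ℤ) (k : ℕ), 1 ≤ k → ω n k = ω (n - k) 0) :
    diagonalLimit ω = headValues ω := by
  funext n
  have hconst : ∀ᶠ j : ℕ in atTop, ω (n + j) j = ω n 0 :=
    eventually_atTop.2 ⟨1, fun j hj => by simpa using hω (n + j) j hj⟩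
  have : (∀ᶠ j : ℕ in atTop, ω (n + j) j = true) ↔ ω n 0 = true := by
    rw [eventually_congr (hconst.mono fun j hj => by rw [hj]), eventually_const]
  simp [diagonalLimit, headValues, this]

lemma exists_futureTail_measure_symmDiff_eq_zero {μ : Measure (ℤ → ℕ → Bool)}
    (hμ : ∀ᵐ ω ∂μ, ∀ (n : ℤ) (k : ℕ), 1 ≤ k → ω n k = ω (n - k) 0)
    {S : Set (ℤ → ℕ → Bool)} (hS : MeasurableSet S) :
    ∃ B, MeasurableSet[futureTail (ℕ → Bool)] B ∧ μ (symmDiff S B) = 0 :=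
  exists_measurableSet_measure_symmDiff_eq_zero_of_ae_eq_id
    (measurable_pastWindows.comp measurable_diagonalLimit)
    (hμ.mono fun ω hω => by
      simp only [Function.comp_apply, diagonalLimit_eq_headValues hω, pastWindows_headValues hω,
        id])
    hS

end DiagonalLimit

/-- With the infinite outcome space `A = {0,1}^ℕ`, let `μ` make the components
`ζ_n[0]` i.i.d. fair coins and set `ζ_n[k] = ζ_{n-k}[0]`.  Then `μ` is stationary, its
completed future tail is the full (product) σ-algebra, its completed past tail is
trivial; consequently the completed past and future tails differ. -/
theorem infinite_outcomes_tails_differ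
    (μ : Measure (ℤ → (ℕ → Bool))) [IsProbabilityMeasure μ]
    (hiid : ∀ (F : Finset ℤ) (b : ℤ → Bool),
      μ {ω | ∀ n ∈ F, ω n 0 = b n} = (1 / 2 : ℝ≥0∞) ^ F.card)
    (hcopy : μ {ω | ∀ (n : ℤ) (k : ℕ), 1 ≤ k → ω n k = ω (n - (k : ℤ)) 0} = 1) :
    MeasurePreserving (shiftZ (A := ℕ → Bool)) μ μ ∧
    (∀ S : Set (ℤ → (ℕ → Bool)), MeasurableSet S →
      ∃ B, MeasurableSet[futureTail (ℕ → Bool)] B ∧ μ (symmDiff S B) = 0) ∧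
    (∀ S : Set (ℤ → (ℕ → Bool)), MeasurableSet[pastTail (ℕ → Bool)] S →
      μ S = 0 ∨ μ S = 1) ∧
    {S : Set (ℤ → (ℕ → Bool)) |
        ∃ B, MeasurableSet[pastTail (ℕ → Bool)] B ∧ μ (symmDiff S B) = 0} ≠
      {S : Set (ℤ → (ℕ → Bool)) |
        ∃ B, MeasurableSet[futureTail (ℕ → Bool)] B ∧ μ (symmDiff S B) = 0} := by
  have hcons : ∀ᵐ ω ∂μ, ∀ (n : ℤ) (k : ℕ), 1 ≤ k → ω n k = ω (n - k) 0 :=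
    (ae_iff_prob_eq_one (by measurability)).2 hcopy
  have hfair : IsFairCoinProcess (μ.map headValues) := fun F b => by
    rw [Measure.map_apply measurable_headValues (measurableSet_setOf_forall_mem_eq F b)]
    exact hiid F b
  have hμ : (μ.map headValues).map pastWindows = μ := map_headValues_map_pastWindows hcons
  have hfuture := fun S (hS : MeasurableSet S) =>
    exists_futureTail_measure_symmDiff_eq_zero hcons hS
  have hpast : ∀ S, MeasurableSet[pastTail (ℕ → Bool)] S → μ S = 0 ∨ μ S = 1 := fun S hS =>
    hμ ▸ measure_map_pastWindows_eq_zero_or_one hfair.iIndepFun_eval hS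
  refine ⟨hμ ▸ hfair.measurePreserving_shiftZ.shiftZ_map_pastWindows, hfuture, hpast,
    fun h => ?_⟩
  obtain ⟨B, hB, hSB⟩ :=
    (Set.ext_iff.1 h {ω | ω 0 0 = true}).2 (hfuture _ (by measurability))
  have hhalf : μ B = 2⁻¹ := by
    rw [← measure_congr (measure_symmDiff_eq_zero_iff.1 hSB)]
    simpa using hiid {0} fun _ => true
  rcases hpast B hB with hB01 | hB01 <;> rw [hB01] at hhalf
  · exact ENNReal.inv_ne_zero.2 ENNReal.ofNat_ne_top hhalf.symm
  · exact ENNReal.one_half_lt_one.ne' hhalf
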